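/- Let Δ be a 2-dimensional Buchsbaum simplicial complex and F = {a,b,c} a 3-element set, and set Γ = Δ ∪ ⟨F⟩. If Δ ∩ ⟨F⟩ = ⟨{a,b},{a,c},{b,c}⟩, then Γ is Buchsbaum and h(Γ) = h(Δ) + (0,0,0,1). -/

import Mathlib

open Finset

noncomputable section

/-- `Δ` is a simplicial complex on `[n] = {1,…,n}`: a collection of subsets of `[n]`,
closed under taking subsets, containing every singleton `{i}` for `i ∈ [n]`. -/
def IsComplexOn (n : ℕ) (Δ : Finset (Finset ℕ)) : Prop :=
  (∀ F ∈ Δ, ∀ G ⊆ F, G ∈ Δ) ∧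
  (∀ F ∈ Δ, ∀ i ∈ F, i ∈ Finset.Icc 1 n) ∧
  (∀ i ∈ Finset.Icc 1 n, ({i} : Finset ℕ) ∈ Δ)

/-- a simplicial complex whose vertex set is contained in `[n]`:
a downward closed collection of subsets of `[n]`. -/
def IsComplexIn (n : ℕ) (Δ : Finset (Finset ℕ)) : Prop :=
  (∀ F ∈ Δ, ∀ G ⊆ F, G ∈ Δ) ∧ (∀ F ∈ Δ, ∀ i ∈ F, i ∈ Finset.Icc 1 n)

/-- the faces of `Δ` with `m` vertices -/
def facesOf (Δ : Finset (Finset ℕ)) (m : ℕ) : Finset (Finset ℕ) :=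
  Δ.filter fun F => F.card = m

/-- `fVec Δ j = f_{j-1}(Δ)`, the number of faces of `Δ` with `j` vertices;
by convention `f_{-1}(Δ) = 1`. -/
def fVec (Δ : Finset (Finset ℕ)) (j : ℕ) : ℤ :=
  if j = 0 then 1 else ((facesOf Δ j).card : ℤ)

/-- the `h`-vector of a `(d-1)`-dimensional complex, defined by
`∑ f_{i-1} (x-1)^{d-i} = ∑ h_i x^{d-i}`, i.e.
`h_i = ∑_{j=0}^{i} (-1)^{i-j} C(d-j, i-j) f_{j-1}`. -/
def hVec (d : ℕ) (Δ : Finset (Finset ℕ)) (i : ℕ) : ℤ :=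
  ∑ j ∈ Finset.range (i + 1),
    (-1 : ℤ) ^ (i - j) * ((d - j).choose (i - j) : ℤ) * fVec Δ j

/-- the dimension `max {k : f_k(Δ) ≠ 0}` of `Δ`, as an integer -/
def dimZ (Δ : Finset (Finset ℕ)) : ℤ := ((Δ.sup Finset.card : ℕ) : ℤ) - 1

/-- the link `lk_Δ(F) = {G : G ∩ F = ∅, G ∪ F ∈ Δ}` -/
def link (Δ : Finset (Finset ℕ)) (F : Finset ℕ) : Finset (Finset ℕ) :=
  Δ.filter fun G => Disjoint G F ∧ G ∪ F ∈ Δ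

variable (K : Type) [Field K]

/-- the simplicial boundary operator on formal `K`-linear combinations of
finite subsets of `ℕ` (vertices ordered by the order on `ℕ`):
`∂ F = ∑_{v ∈ F} (-1)^{#{u ∈ F : u < v}} (F \ {v})`. -/
def bdry : (Finset ℕ →₀ K) →ₗ[K] (Finset ℕ →₀ K) :=
  Finsupp.lsum K fun F => LinearMap.toSpanSingleton K (Finset ℕ →₀ K)
    (∑ v ∈ F, ((-1 : K) ^ ((F.filter fun u => u < v).card)) • Finsupp.single (F.erase v) (1 : K))

/-- the space of simplicial `K`-chains of `Δ` spanned by the faces with `m` vertices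
(for `m = 0` this is the span of the empty face, giving *reduced* homology) -/
def chains (Δ : Finset (Finset ℕ)) (m : ℕ) : Submodule K (Finset ℕ →₀ K) :=
  Submodule.span K ((fun F => Finsupp.single F (1 : K)) '' (facesOf Δ m : Set (Finset ℕ)))

/-- the dimension of the reduced homology of `Δ` at faces of cardinality `m`:
`dim (ker ∂ ∩ C_m) - dim (∂ C_{m+1})` -/
def homDim (Δ : Finset (Finset ℕ)) (m : ℕ) : ℕ :=
  Module.finrank K ↥(chains K Δ m ⊓ LinearMap.ker (bdry K))
    - Module.finrank K ↥((chains K Δ (m + 1)).map (bdry K))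

/-- the reduced Betti number `β_i(Δ; K) = dim_K H̃_i(Δ; K)` for `i : ℤ` -/
def betti (Δ : Finset (Finset ℕ)) (i : ℤ) : ℕ :=
  if 0 ≤ i + 1 then homDim K Δ (i + 1).toNat else 0

/-- all facets (maximal faces) of `Δ` have the same cardinality -/
def IsPure (Δ : Finset (Finset ℕ)) : Prop :=
  ∀ F ∈ Δ, (∀ G ∈ Δ, F ⊆ G → F = G) → F.card = Δ.sup Finset.card

/-- `Δ` is Cohen–Macaulay (over `K`): for every face `F ∈ Δ` (including `∅`),
`β_i(lk_Δ(F)) = 0` for all `i ≠ dim Δ - |F|`. -/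
def IsCohenMacaulay (Δ : Finset (Finset ℕ)) : Prop :=
  ∀ F ∈ Δ, ∀ i : ℤ, i ≠ dimZ Δ - F.card → betti K (link Δ F) i = 0

/-- `Δ` is Buchsbaum (over `K`): `Δ` is pure and the link of every vertex is
Cohen–Macaulay. -/
def IsBuchsbaum (Δ : Finset (Finset ℕ)) : Prop :=
  IsPure Δ ∧ ∀ v : ℕ, ({v} : Finset ℕ) ∈ Δ → IsCohenMacaulay K (link Δ {v})

/-- `Δ` is connected: any two vertices are joined by a path of edges of `Δ` -/
def IsConnectedComplex (Δ : Finset (Finset ℕ)) : Prop :=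
  ∀ u v : ℕ, ({u} : Finset ℕ) ∈ Δ → ({v} : Finset ℕ) ∈ Δ →
    Relation.ReflTransGen (fun a b : ℕ => a ≠ b ∧ ({a, b} : Finset ℕ) ∈ Δ) u v

/-- `Δ` is link-acyclic: `β_i(lk_Δ(v)) = 0` for every vertex `v` of `Δ` and every `i` -/
def IsLinkAcyclic (Δ : Finset (Finset ℕ)) : Prop :=
  ∀ v : ℕ, ({v} : Finset ℕ) ∈ Δ → ∀ i : ℤ, betti K (link Δ {v}) i = 0

/-- `Δ` is `2`-dimensional with `h`-vector `(a, b, c, e)` -/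
def hVector3 (Δ : Finset (Finset ℕ)) (a b c e : ℤ) : Prop :=
  hVec 3 Δ 0 = a ∧ hVec 3 Δ 1 = b ∧ hVec 3 Δ 2 = c ∧ hVec 3 Δ 3 = e

/-- `macaulay2 a = a^⟨2⟩`: if `a = C(b,2) + r` is the (greedy) `2`-nd Macaulay
representation (`b` maximal with `C(b,2) ≤ a`, `0 ≤ r < b`, `r = C(r,1)`), then
`a^⟨2⟩ = C(b+1,3) + C(r+1,2)`, and `0^⟨2⟩ = 0`. -/
def macaulay2 (a : ℕ) : ℕ :=
  if a = 0 then 0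
  else
    (Nat.findGreatest (fun t => t.choose 2 ≤ a) (a + 2) + 1).choose 3
      + (a - (Nat.findGreatest (fun t => t.choose 2 ≤ a) (a + 2)).choose 2 + 1).choose 2

/-- `modRep n i = ī`, the unique element of `[n] = {1,…,n}` congruent to `i` mod `n` -/
def modRep (n : ℕ) (i : ℤ) : ℕ := ((i - 1) % (n : ℤ)).toNat + 1


end

/-!
`Γ` is `Δ` with the single face `F = {a,b,c}` added, all of whose proper faces already lie in `Δ`.
Hence only `f₂` changes, by one, which shifts `h₃` alone, and purity is preserved. The link of a
vertex outside `F` is unchanged, while the link of a vertex `v ∈ F` gains the edge `F \ {v}`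
without gaining vertices. A one-dimensional complex is Cohen–Macaulay iff it is nonempty,
connected and has no isolated vertices, and adding an edge between existing vertices preserves
all three.
-/

section Homology

variable (K : Type) [Field K] {X Y : Finset (Finset ℕ)}

instance (X : Finset (Finset ℕ)) (m : ℕ) : FiniteDimensional K (chains K X m) :=
  FiniteDimensional.span_of_finite K ((facesOf X m).finite_toSet.image _)

lemma bdry_single (F : Finset ℕ) : bdry K (Finsupp.single F 1) =
    ∑ v ∈ F, (-1 : K) ^ (F.filter (· < v)).card • Finsupp.single (F.erase v) (1 : K) := by
  simp [bdry]

lemma chains_eq_bot {m : ℕ} (h : facesOf X m = ∅) : chains K X m = ⊥ := by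
  simp [chains, h]

lemma chains_mono {m : ℕ} (h : facesOf X m ⊆ facesOf Y m) : chains K X m ≤ chains K Y m :=
  Submodule.span_mono (Set.image_mono h)

lemma single_mem_chains {F : Finset ℕ} {m : ℕ} (hF : F ∈ X) (hm : F.card = m) :
    Finsupp.single F (1 : K) ∈ chains K X m :=
  Submodule.subset_span ⟨F, mem_filter.mpr ⟨hF, hm⟩, rfl⟩

lemma chains_zero_le : chains K X 0 ≤ K ∙ Finsupp.single ∅ (1 : K) := by
  refine Submodule.span_le.mpr ?_
  rintro _ ⟨F, hF, rfl⟩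
  obtain rfl : F = ∅ := card_eq_zero.mp (mem_filter.mp hF).2
  exact Submodule.mem_span_singleton_self _

lemma chains_zero_eq (h : ∅ ∈ X) : chains K X 0 = K ∙ Finsupp.single ∅ (1 : K) := by
  refine le_antisymm (chains_zero_le K) ?_
  rw [Submodule.span_singleton_le_iff_mem]
  exact single_mem_chains K h card_empty

lemma homDim_eq_zero_of_facesOf_eq_empty {m : ℕ} (h : facesOf X m = ∅) : homDim K X m = 0 := by
  rw [homDim, chains_eq_bot K h, bot_inf_eq, finrank_bot, Nat.zero_sub]

lemma homDim_le_of_facesOf_eq {m : ℕ} (h : facesOf X m = facesOf Y m)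
    (hsucc : facesOf X (m + 1) ⊆ facesOf Y (m + 1)) : homDim K Y m ≤ homDim K X m := by
  have hchains : chains K X m = chains K Y m := by rw [chains, h, chains]
  rw [homDim, homDim, hchains]
  exact Nat.sub_le_sub_left (Submodule.finrank_mono (Submodule.map_mono (chains_mono K hsucc))) _

lemma homDim_zero_eq_zero_of_singleton_mem {u : ℕ} (hu : {u} ∈ X) : homDim K X 0 = 0 := by
  have hcycles : chains K X 0 ⊓ LinearMap.ker (bdry K) ≤ K ∙ Finsupp.single ∅ (1 : K) :=
    inf_le_left.trans (chains_zero_le K)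
  have hboundaries : K ∙ Finsupp.single ∅ (1 : K) ≤ (chains K X (0 + 1)).map (bdry K) :=
    Submodule.span_singleton_le_iff_mem _ _ |>.mpr
      ⟨_, single_mem_chains K hu (card_singleton u), by simp [bdry_single, filter_singleton]⟩
  exact Nat.sub_eq_zero_of_le
    ((Submodule.finrank_mono hcycles).trans (Submodule.finrank_mono hboundaries))

lemma homDim_zero_eq_one (h : ∅ ∈ X) (hvert : facesOf X 1 = ∅) : homDim K X 0 = 1 := by
  have hcycles : chains K X 0 ≤ LinearMap.ker (bdry K) := by
    rw [chains_zero_eq K h, Submodule.span_singleton_le_iff_mem]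
    simp [bdry_single]
  rw [homDim, inf_eq_left.mpr hcycles, chains_zero_eq K h, chains_eq_bot K hvert,
    Submodule.map_bot, finrank_bot, finrank_span_singleton (by simp)]

lemma exists_singleton_mem_of_homDim_zero_eq_zero (h : ∅ ∈ X) (h0 : homDim K X 0 = 0) :
    ∃ u, {u} ∈ X := by
  by_contra! hX
  have hvert : facesOf X 1 = ∅ := by
    refine filter_eq_empty_iff.mpr fun G hG hG1 => ?_
    obtain ⟨u, rfl⟩ := card_eq_one.mp hG1
    exact hX u hG
  simp [homDim_zero_eq_one K h hvert] at h0

end Homology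

section Link

variable {X Y : Finset (Finset ℕ)} {F G : Finset ℕ}

@[simp] lemma mem_link : G ∈ link X F ↔ G ∈ X ∧ Disjoint G F ∧ G ∪ F ∈ X := by
  simp [link]

@[simp] lemma link_empty : link X ∅ = X := by
  ext G
  simp only [mem_link, disjoint_empty_right, union_empty, true_and, and_self]

lemma link_mono (h : X ⊆ Y) : link X F ⊆ link Y F := fun G hG => by
  rw [mem_link] at hG ⊢
  exact ⟨h hG.1, hG.2.1, h hG.2.2⟩

lemma empty_mem_link (h : ∅ ∈ X) (hF : F ∈ X) : ∅ ∈ link X F := by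
  simp [h, hF]

lemma card_add_card_le_of_mem_link {d : ℕ} (hX : ∀ H ∈ X, H.card ≤ d) (hG : G ∈ link X F) :
    G.card + F.card ≤ d := by
  rw [mem_link] at hG
  rw [← card_union_of_disjoint hG.2.1]
  exact hX _ hG.2.2

lemma facesOf_link_eq_empty {d m : ℕ} (hX : ∀ H ∈ X, H.card ≤ d) (hm : d < m + F.card) :
    facesOf (link X F) m = ∅ :=
  filter_eq_empty_iff.mpr fun _ hG hGm => by
    have := card_add_card_le_of_mem_link hX hG
    omega

end Link

section CohenMacaulay

variable (K : Type) [Field K] {X : Finset (Finset ℕ)}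

lemma isCohenMacaulay_iff_homDim : IsCohenMacaulay K X ↔
    ∀ F ∈ X, ∀ m : ℕ, (m : ℤ) ≠ dimZ X - F.card + 1 → homDim K (link X F) m = 0 := by
  refine ⟨fun h F hF m hm => ?_, fun h F hF i hi => ?_⟩
  · have := h F hF (m - 1) (by omega)
    simpa [betti] using this
  · rw [betti]
    split_ifs with hi'
    · exact h F hF _ (by omega)
    · rfl

lemma card_le_two_of_dimZ_eq_one (hdim : dimZ X = 1) {G : Finset ℕ} (hG : G ∈ X) :
    G.card ≤ 2 := by
  have := le_sup (f := card) hG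
  rw [dimZ] at hdim
  omega

lemma isCohenMacaulay_of_dimZ_eq_one (hdim : dimZ X = 1) {u : ℕ} (hu : {u} ∈ X)
    (hconn : homDim K X 1 = 0) (hnbr : ∀ w, {w} ∈ X → ∃ v, {v} ∈ link X {w}) :
    IsCohenMacaulay K X := by
  rw [isCohenMacaulay_iff_homDim]
  intro F hF m hm
  rw [hdim] at hm
  have hX := fun G => card_le_two_of_dimZ_eq_one hdim (G := G)
  by_cases hlarge : 2 < m + F.card
  · exact homDim_eq_zero_of_facesOf_eq_empty K (facesOf_link_eq_empty hX hlarge)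
  have hF2 := hX F hF
  interval_cases hc : F.card
  · obtain rfl := card_eq_zero.mp hc
    obtain rfl | rfl : m = 0 ∨ m = 1 := by omega
    · simpa using homDim_zero_eq_zero_of_singleton_mem K hu
    · simpa using hconn
  · obtain ⟨w, rfl⟩ := card_eq_one.mp hc
    obtain rfl : m = 0 := by omega
    obtain ⟨v, hv⟩ := hnbr w hF
    exact homDim_zero_eq_zero_of_singleton_mem K hv
  · omega

variable {K}

lemma IsCohenMacaulay.homDim_one_eq_zero (hX : IsCohenMacaulay K X) (hdim : dimZ X = 1)
    (h : ∅ ∈ X) : homDim K X 1 = 0 := by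
  simpa using (isCohenMacaulay_iff_homDim K).mp hX ∅ h 1 (by simp [hdim])

lemma IsCohenMacaulay.exists_singleton_mem (hX : IsCohenMacaulay K X) (hdim : dimZ X = 1)
    (h : ∅ ∈ X) : ∃ u, {u} ∈ X := by
  refine exists_singleton_mem_of_homDim_zero_eq_zero K h ?_
  simpa using (isCohenMacaulay_iff_homDim K).mp hX ∅ h 0 (by simp [hdim])

lemma IsCohenMacaulay.exists_singleton_mem_link (hX : IsCohenMacaulay K X) (hdim : dimZ X = 1)
    (h : ∅ ∈ X) {w : ℕ} (hw : {w} ∈ X) : ∃ u, {u} ∈ link X {w} :=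
  exists_singleton_mem_of_homDim_zero_eq_zero K (empty_mem_link h hw)
    ((isCohenMacaulay_iff_homDim K).mp hX {w} hw 0 (by simp [hdim]))

lemma IsCohenMacaulay.insert_of_card_eq_two (hX : IsCohenMacaulay K X) (hdim : dimZ X = 1)
    (h : ∅ ∈ X) {e : Finset ℕ} (he : e.card = 2) : IsCohenMacaulay K (insert e X) := by
  have hdim' : dimZ (insert e X) = 1 := by
    rw [dimZ] at hdim ⊢
    rw [sup_insert, he]
    omega
  have hvert : facesOf X 1 = facesOf (insert e X) 1 := by
    rw [facesOf, facesOf, filter_insert, if_neg (by omega)]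
  have hedges : facesOf X 2 ⊆ facesOf (insert e X) 2 := filter_subset_filter _ (subset_insert _ _)
  obtain ⟨u, hu⟩ := hX.exists_singleton_mem hdim h
  refine isCohenMacaulay_of_dimZ_eq_one K hdim' (mem_insert_of_mem hu) ?_ fun w hw => ?_
  · exact Nat.le_zero.mp
      ((homDim_le_of_facesOf_eq K hvert hedges).trans (hX.homDim_one_eq_zero hdim h).le)
  · have hwX : {w} ∈ X := (mem_insert.mp hw).resolve_left fun hwe => by
      simpa [he] using congrArg card hwe
    obtain ⟨v, hv⟩ := hX.exists_singleton_mem_link hdim h hwX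
    exact ⟨v, link_mono (subset_insert _ _) hv⟩

end CohenMacaulay

section InsertFace

variable {Δ : Finset (Finset ℕ)} {F : Finset ℕ} {v : ℕ}

lemma link_insert_singleton_of_notMem (hdown : ∀ G ∈ Δ, ∀ H ⊆ G, H ∈ Δ) (hv : v ∉ F) :
    link (insert F Δ) {v} = link Δ {v} := by
  ext G
  simp only [mem_link, mem_insert]
  constructor
  · rintro ⟨-, hd, rfl | hGv⟩
    · exact absurd (mem_union_right _ (mem_singleton_self v)) hv
    · exact ⟨hdown _ hGv _ subset_union_left, hd, hGv⟩
  · rintro ⟨hG, hd, hGv⟩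
    exact ⟨.inr hG, hd, .inr hGv⟩

lemma link_insert_singleton_of_mem (hv : v ∈ F) (hFv : F.erase v ∈ Δ) :
    link (insert F Δ) {v} = insert (F.erase v) (link Δ {v}) := by
  ext G
  simp only [mem_link, mem_insert]
  constructor
  · rintro ⟨hG, hd, hGv⟩
    have hvG : v ∉ G := disjoint_singleton_right.mp hd
    rcases hGv with hGv | hGv
    · left
      rw [← hGv, union_singleton, erase_insert hvG]
    · exact .inr ⟨hG.resolve_left (by rintro rfl; exact hvG hv), hd, hGv⟩
  · rintro (rfl | ⟨hG, hd, hGv⟩)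
    · exact ⟨.inr hFv, by simp, .inl (by rw [union_singleton, insert_erase hv])⟩
    · exact ⟨.inr hG, hd, .inr hGv⟩

lemma IsPure.insert (hΔ : IsPure Δ) (hF : F.card = Δ.sup card) : IsPure (insert F Δ) := by
  intro G hG hmax
  rw [sup_insert, ← hF, sup_idem]
  rcases mem_insert.mp hG with rfl | hG
  · rfl
  · exact hF ▸ hΔ G hG fun H hH => hmax H (mem_insert_of_mem hH)

lemma IsPure.exists_superset_card_eq_sup (hΔ : IsPure Δ) {G : Finset ℕ} (hG : G ∈ Δ) :
    ∃ M ∈ Δ, G ⊆ M ∧ M.card = Δ.sup card := by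
  obtain ⟨M, hM, hmax⟩ := exists_max_image (Δ.filter (G ⊆ ·)) card ⟨G, by simp [hG]⟩
  rw [mem_filter] at hM
  refine ⟨M, hM.1, hM.2, hΔ M hM.1 fun H hH hMH => ?_⟩
  exact eq_of_subset_of_card_le hMH (hmax H (mem_filter.mpr ⟨hH, hM.2.trans hMH⟩))

lemma IsPure.dimZ_link_singleton (hΔ : IsPure Δ) (hdown : ∀ G ∈ Δ, ∀ H ⊆ G, H ∈ Δ)
    (hv : {v} ∈ Δ) : dimZ (link Δ {v}) = dimZ Δ - 1 := by
  have hle : ∀ G ∈ link Δ {v}, G.card + 1 ≤ Δ.sup card := fun G hG =>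
    card_add_card_le_of_mem_link (fun H hH => le_sup hH) hG
  obtain ⟨G, hG, hGsup⟩ := exists_mem_eq_sup _
    ⟨∅, empty_mem_link (hdown _ hv _ (empty_subset _)) hv⟩ card
  obtain ⟨M, hM, hvM, hMsup⟩ := hΔ.exists_superset_card_eq_sup hv
  have hvM : v ∈ M := singleton_subset_iff.mp hvM
  have hMv : M.erase v ∈ link Δ {v} := by
    simp [hdown _ hM _ (erase_subset v M), union_singleton, insert_erase hvM, hM]
  have hge := le_sup (f := card) hMv
  rw [card_erase_of_mem hvM] at hge
  have := hle G hG
  rw [dimZ, dimZ]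
  omega

end InsertFace

lemma IsBuchsbaum.insert_of_card_eq_three {K : Type} [Field K] {Δ : Finset (Finset ℕ)}
    {F : Finset ℕ} (hB : IsBuchsbaum K Δ) (hdown : ∀ G ∈ Δ, ∀ H ⊆ G, H ∈ Δ) (hdim : dimZ Δ = 2)
    (hF : F.card = 3) (hbd : ∀ G ⊂ F, G ∈ Δ) : IsBuchsbaum K (insert F Δ) := by
  have hsup : Δ.sup card = 3 := by
    rw [dimZ] at hdim
    omega
  refine ⟨hB.1.insert (hF.trans hsup.symm), fun v hv => ?_⟩
  by_cases hvF : v ∈ F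
  · have hvΔ : {v} ∈ Δ :=
      hbd _ (Finset.ssubset_iff_subset_ne.mpr ⟨singleton_subset_iff.mpr hvF, by
        rintro rfl
        simp at hF⟩)
    rw [link_insert_singleton_of_mem hvF (hbd _ (erase_ssubset hvF))]
    refine (hB.2 v hvΔ).insert_of_card_eq_two ?_ ?_ (by rw [card_erase_of_mem hvF, hF])
    · rw [hB.1.dimZ_link_singleton hdown hvΔ, hdim]
      norm_num
    · exact empty_mem_link (hdown _ hvΔ _ (empty_subset _)) hvΔ
  · rw [link_insert_singleton_of_notMem hdown hvF]
    exact hB.2 v ((mem_insert.mp hv).resolve_left fun h => hvF (h ▸ mem_singleton_self v))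

section FaceNumbers

variable {Δ : Finset (Finset ℕ)} {F : Finset ℕ}

lemma fVec_insert (hF : F ∉ Δ) (hF0 : F.Nonempty) (j : ℕ) :
    fVec (insert F Δ) j = fVec Δ j + if F.card = j then 1 else 0 := by
  unfold fVec facesOf
  rw [filter_insert]
  split_ifs with hj hFj
  · exact absurd (hj ▸ hFj) hF0.card_ne_zero
  · simp
  · rw [card_insert_of_notMem fun h => hF (mem_filter.mp h).1, Nat.cast_succ]
  · simp

lemma hVec_insert (hF : F ∉ Δ) (hF0 : F.Nonempty) (d i : ℕ) :
    hVec d (insert F Δ) i = hVec d Δ i +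
      if F.card ≤ i then (-1 : ℤ) ^ (i - F.card) * ((d - F.card).choose (i - F.card) : ℤ)
      else 0 := by
  simp only [hVec, fVec_insert hF hF0, mul_add, sum_add_distrib, mul_ite, mul_one, mul_zero,
    sum_ite_eq, mem_range, Nat.lt_succ_iff]

end FaceNumbers

lemma powerset_pair_union_eq_ssubsets {α : Type*} [DecidableEq α] {a b c : α}
    (hab : a ≠ b) (hac : a ≠ c) (hbc : b ≠ c) :
    ({a, b} : Finset α).powerset ∪ ({a, c} : Finset α).powerset ∪ ({b, c} : Finset α).powerset =
      ({a, b, c} : Finset α).ssubsets := by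
  have hea : ({a, b, c} : Finset α).erase a = {b, c} := by grind
  have heb : ({a, b, c} : Finset α).erase b = {a, c} := by grind
  have hec : ({a, b, c} : Finset α).erase c = {a, b} := by grind
  ext G
  simp only [mem_union, mem_powerset, mem_ssubsets, ssubset_iff_exists_subset_erase,
    exists_mem_insert, mem_singleton, exists_eq_left, hea, heb, hec]
  tauto

lemma union_powerset_eq_insert {Δ : Finset (Finset ℕ)} {F : Finset ℕ} (hbd : ∀ G ⊂ F, G ∈ Δ) :
    Δ ∪ F.powerset = insert F Δ := by
  ext G
  simp only [mem_union, mem_powerset, mem_insert]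
  constructor
  · rintro (hG | hG)
    · exact .inr hG
    · exact (eq_or_ssubset_of_subset hG).imp id (hbd G)
  · rintro (rfl | hG)
    · exact .inr subset_rfl
    · exact .inl hG

/-- **Lemma 2.5.** Let `Δ` be a `2`-dimensional Buchsbaum complex, `F = {a,b,c}`,
and `Γ = Δ ∪ ⟨F⟩`. If `Δ ∩ ⟨F⟩ = ({a, b} : Finset ℕ).powerset ∪ ({a, c} : Finset ℕ).powerset ∪ ({b, c} : Finset ℕ).powerset` then `Γ` is Buchsbaum
and the `h`-vector changes as stated. -/
theorem stmt8 (K : Type) [Field K] (nn : ℕ) (Δ Γ : Finset (Finset ℕ)) (a b c : ℕ)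
    (hΔ : IsComplexOn nn Δ) (hdim : dimZ Δ = 2) (hB : IsBuchsbaum K Δ)
    (hab : a ≠ b) (hac : a ≠ c) (hbc : b ≠ c)
    (hΓ : Γ = Δ ∪ ({a, b, c} : Finset ℕ).powerset)
    (hcap : Δ ∩ ({a, b, c} : Finset ℕ).powerset = ({a, b} : Finset ℕ).powerset ∪ ({a, c} : Finset ℕ).powerset ∪ ({b, c} : Finset ℕ).powerset) :
    IsBuchsbaum K Γ ∧ hVec 3 Γ 0 = hVec 3 Δ 0 ∧
      hVec 3 Γ 1 = hVec 3 Δ 1 ∧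
      hVec 3 Γ 2 = hVec 3 Δ 2 ∧
      hVec 3 Γ 3 = hVec 3 Δ 3 + 1 := by
  rw [powerset_pair_union_eq_ssubsets hab hac hbc] at hcap
  have hface : ∀ G ⊆ ({a, b, c} : Finset ℕ), G ∈ Δ ↔ G ⊂ {a, b, c} := fun G hG => by
    simpa [hG] using congrArg (G ∈ ·) hcap
  have hbd : ∀ G ⊂ ({a, b, c} : Finset ℕ), G ∈ Δ := fun G hG => (hface G hG.subset).mpr hG
  have hFΔ : ({a, b, c} : Finset ℕ) ∉ Δ := fun h => ssubset_irrefl _ ((hface _ subset_rfl).mp h)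
  have hF : ({a, b, c} : Finset ℕ).card = 3 := card_eq_three.mpr ⟨a, b, c, hab, hac, hbc, rfl⟩
  have hvec := hVec_insert hFΔ (insert_nonempty _ _) 3
  rw [hΓ, union_powerset_eq_insert hbd]
  refine ⟨hB.insert_of_card_eq_three hΔ.1 hdim hF hbd, ?_, ?_, ?_, ?_⟩ <;> simp [hvec, hF]
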